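/- Let A be an algebra. If R ⊆ [R,R|1] holds for every reflexive compatible relation R on A, then for all reflexive compatible relations R, S, T on A: R ∩ (S∘T) ⊆ ((S ∩ (R⁻ ∘ (S∩T⁻) ∘ R)) ∘ (T ∩ (R⁻ ∘ (S⁻∩T) ∘ R)))*. -/

import Mathlib

/-!
Apply the hypothesis to `W = R ∩ (S ∘ T)`, so that `a W b` lands in `[W,W|1]`. A generating pair
`(z, w)` of `[W,W|1]` comes from a term with `x = t(p,q) = t(p,q')`, `z = t(p',q)`,
`w = t(p',q')`, where `p R p'` and `q S c T q'` for some tuple `c`. The element `u = t(p',c)`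
splits `z S u T w`, and `v = t(p,c)` routes both halves through `x`:
`z R⁻ x (S ∩ T⁻) v R u` and `u R⁻ v (S⁻ ∩ T) x R w`.
-/

open FirstOrder Language

universe u

/-- A binary relation on a structure `A` is compatible (admissible) if it is preserved
by every operation (function symbol) of the language. -/
def Compatible (L : Language) {A : Type u} [L.Structure A] (R : A → A → Prop) : Prop :=
  ∀ (n : ℕ) (f : L.Functions n) (a b : Fin n → A),
    (∀ i, R (a i) (b i)) → R (Structure.funMap f a) (Structure.funMap f b)

/-- `(x, y; z, w) ∈ M(R, S)`: there is a term `t` and tuples `a R a'`, `b S b'` with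
`x = t(a,b)`, `y = t(a,b')`, `z = t(a',b)`, `w = t(a',b')`. -/
def InM (L : Language) {A : Type u} [L.Structure A] (R S : A → A → Prop)
    (x y z w : A) : Prop :=
  ∃ (n m : ℕ) (t : L.Term (Fin n ⊕ Fin m)) (a a' : Fin n → A) (b b' : Fin m → A),
    (∀ i, R (a i) (a' i)) ∧ (∀ j, S (b j) (b' j)) ∧
      x = t.realize (Sum.elim a b) ∧ y = t.realize (Sum.elim a b') ∧
      z = t.realize (Sum.elim a' b) ∧ w = t.realize (Sum.elim a' b')

/-- `[R, S | 1]`: the transitive closure of `{(z,w) : (x,x;z,w) ∈ M(R,S) for some x}`. -/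
def comm1 (L : Language) {A : Type u} [L.Structure A] (R S : A → A → Prop) :
    A → A → Prop :=
  Relation.TransGen (fun z w => ∃ x, InM L R S x x z w)

/-- Relational composition. -/
def rcomp {A : Type u} (R S : A → A → Prop) : A → A → Prop :=
  fun a c => ∃ b, R a b ∧ S b c

/-- Converse of a relation. -/
def rconv {A : Type u} (R : A → A → Prop) : A → A → Prop := fun a b => R b a

/-- Intersection of relations. -/
def rinter {A : Type u} (R S : A → A → Prop) : A → A → Prop := fun a b => R a b ∧ S a b

/-- A congruence: a compatible equivalence relation. -/
def IsCongruence (L : Language) {A : Type u} [L.Structure A] (θ : A → A → Prop) : Prop :=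
  Equivalence θ ∧ Compatible L θ

/-- A tolerance: a reflexive symmetric compatible relation. -/
def IsTolerance (L : Language) {A : Type u} [L.Structure A] (T : A → A → Prop) : Prop :=
  Reflexive T ∧ Symmetric T ∧ Compatible L T

/-- `Cg R`: the smallest congruence containing `R` (intersection of all congruences ⊇ R). -/
def Cg (L : Language) {A : Type u} [L.Structure A] (R : A → A → Prop) : A → A → Prop :=
  fun a b => ∀ θ : A → A → Prop, IsCongruence L θ → (∀ x y, R x y → θ x y) → θ a b

/-- `R°`: the smallest tolerance containing `R`. -/
def tolC (L : Language) {A : Type u} [L.Structure A] (R : A → A → Prop) : A → A → Prop :=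
  fun a b => ∀ T : A → A → Prop, IsTolerance L T → (∀ x y, R x y → T x y) → T a b

/-- `K(R,S;V) = {(z,w) : ∃ x y, (x,y;z,w) ∈ M(R,S) ∧ x V y}`. -/
def Kop (L : Language) {A : Type u} [L.Structure A] (R S V : A → A → Prop) :
    A → A → Prop :=
  fun z w => ∃ x y, InM L R S x y z w ∧ V x y

/-- The join `γ ∨ D`: the smallest congruence containing both `γ` and `D`. -/
def cgJoin (L : Language) {A : Type u} [L.Structure A] (γ D : A → A → Prop) :
    A → A → Prop :=
  fun a b => ∀ θ : A → A → Prop, IsCongruence L θ → (∀ x y, γ x y → θ x y) →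
    (∀ x y, D x y → θ x y) → θ a b

variable {L : Language} {A : Type u} [L.Structure A]

theorem Compatible.realize {P : A → A → Prop} (hP : Compatible L P) {α : Type*}
    (t : L.Term α) {v v' : α → A} (hv : ∀ x, P (v x) (v' x)) :
    P (t.realize v) (t.realize v') := by
  induction t with
  | var x => exact hv x
  | func f ts ih => exact hP _ f _ _ ih

theorem Compatible.realize_sumElim {P : A → A → Prop} (hP : Compatible L P) {n m : ℕ}
    (t : L.Term (Fin n ⊕ Fin m)) {e e' : Fin n → A} {d d' : Fin m → A}
    (he : ∀ i, P (e i) (e' i)) (hd : ∀ j, P (d j) (d' j)) :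
    P (t.realize (Sum.elim e d)) (t.realize (Sum.elim e' d')) :=
  hP.realize t (Sum.forall.2 ⟨he, hd⟩)

theorem Compatible.rinter {R S : A → A → Prop} (hR : Compatible L R) (hS : Compatible L S) :
    Compatible L (rinter R S) :=
  fun n f a b hab => ⟨hR n f a b fun i => (hab i).1, hS n f a b fun i => (hab i).2⟩

theorem Compatible.rcomp {R S : A → A → Prop} (hR : Compatible L R) (hS : Compatible L S) :
    Compatible L (rcomp R S) := by
  intro n f a b hab
  choose c hac hcb using hab
  exact ⟨Structure.funMap f c, hR n f a c hac, hS n f c b hcb⟩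

theorem InM.mono {R R' S S' : A → A → Prop} {x y z w : A} (hRR' : ∀ a b, R a b → R' a b)
    (hSS' : ∀ a b, S a b → S' a b) (hM : InM L R S x y z w) : InM L R' S' x y z w := by
  obtain ⟨n, m, t, a, a', b, b', hR, hS, hx, hy, hz, hw⟩ := hM
  exact ⟨n, m, t, a, a', b, b', fun i => hRR' _ _ (hR i), fun j => hSS' _ _ (hS j),
    hx, hy, hz, hw⟩

theorem rcomp_of_inM_rcomp {R S T : A → A → Prop}
    (hRr : Reflexive R) (hRc : Compatible L R) (hSr : Reflexive S) (hSc : Compatible L S)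
    (hTr : Reflexive T) (hTc : Compatible L T) {x z w : A}
    (hM : InM L R (rcomp S T) x x z w) :
    rcomp (rinter S (rcomp (rconv R) (rcomp (rinter S (rconv T)) R)))
      (rinter T (rcomp (rconv R) (rcomp (rinter (rconv S) T) R))) z w := by
  obtain ⟨n, m, t, p, p', q, q', hp, hq, hxq, hxq', rfl, rfl⟩ := hM
  choose c hqc hcq' using hq
  set u := t.realize (Sum.elim p' c)
  set v := t.realize (Sum.elim p c)
  have hzu : S (t.realize (Sum.elim p' q)) u :=
    hSc.realize_sumElim t (fun _ => hSr _) hqc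
  have huw : T u (t.realize (Sum.elim p' q')) :=
    hTc.realize_sumElim t (fun _ => hTr _) hcq'
  have hxz : R x (t.realize (Sum.elim p' q)) :=
    hxq ▸ hRc.realize_sumElim t hp fun _ => hRr _
  have hxw : R x (t.realize (Sum.elim p' q')) :=
    hxq' ▸ hRc.realize_sumElim t hp fun _ => hRr _
  have hxv : S x v := hxq ▸ hSc.realize_sumElim t (fun _ => hSr _) hqc
  have hvx : T v x := hxq' ▸ hTc.realize_sumElim t (fun _ => hTr _) hcq'
  have hvu : R v u := hRc.realize_sumElim t hp fun _ => hRr _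
  exact ⟨u, ⟨hzu, x, hxz, v, ⟨hxv, hvx⟩, hvu⟩, huw, v, hvu, x, ⟨hxv, hvx⟩, hxw⟩

theorem stmt15
    (h : ∀ R : A → A → Prop, Reflexive R → Compatible L R →
      ∀ a b, R a b → comm1 L R R a b) :
    ∀ R S T : A → A → Prop,
      Reflexive R → Compatible L R → Reflexive S → Compatible L S →
      Reflexive T → Compatible L T →
      ∀ a b, R a b ∧ rcomp S T a b →
        Relation.TransGen
          (rcomp (rinter S (rcomp (rconv R) (rcomp (rinter S (rconv T)) R)))
                 (rinter T (rcomp (rconv R) (rcomp (rinter (rconv S) T) R)))) a b := by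
  intro R S T hRr hRc hSr hSc hTr hTc a b hab
  have hWr : Reflexive (rinter R (rcomp S T)) := fun x => ⟨hRr x, x, hSr x, hTr x⟩
  have hWc : Compatible L (rinter R (rcomp S T)) := hRc.rinter (hSc.rcomp hTc)
  refine Relation.TransGen.mono ?_ a b (h _ hWr hWc a b hab)
  rintro z w ⟨x, hM⟩
  exact rcomp_of_inM_rcomp hRr hRc hSr hSc hTr hTc
    (hM.mono (fun _ _ hW => hW.1) fun _ _ hW => hW.2)
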